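/- arXiv:1103.4331 — 3 statements merged into one kernel-verified Lean document; each statement's English description precedes it below -/
import Mathlib

section
/- Let f(ξ) be a quasielliptic polynomial of degree d with respect to w with ℤ_p coefficients, and set Ξ(ξ) = Σ_{i=1}^{n} |ξ_i|_p^{d/w_i}. Then there exist positive real constants A₀, A₁ such that A₀ Ξ(ξ) ≤ |f(ξ)|_p ≤ A₁ Ξ(ξ) for all ξ ∈ ℚ_pⁿ with ‖ξ‖_p ≤ 1. -/
open MvPolynomial

/-- `f ∈ ℤ_p[ξ₁,…,ξₙ]` is quasielliptic of degree `d` with respect to weights `w`. -/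
def IsQuasielliptic (p : ℕ) [Fact p.Prime] {n : ℕ} (d : ℕ) (w : Fin n → ℕ)
    (f : MvPolynomial (Fin n) ℤ_[p]) : Prop :=
  f.totalDegree ≠ 0 ∧ (∀ i, 0 < w i) ∧
    (∀ lam : ℚ_[p], lam ≠ 0 → ∀ ξ : Fin n → ℚ_[p],
      aeval (fun i => lam ^ (w i) * ξ i) f = lam ^ d * aeval ξ f) ∧
    (∀ ξ : Fin n → ℚ_[p], aeval ξ f = 0 ↔ ξ = 0)

/-- `Ξ(ξ) = ∑ i, |ξ_i|_p^{d/w_i}`. -/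
noncomputable def Xi (p : ℕ) [Fact p.Prime] {n : ℕ} (d : ℕ) (w : Fin n → ℕ)
    (ξ : Fin n → ℚ_[p]) : ℝ :=
  ∑ i, ‖ξ i‖ ^ ((d : ℝ) / (w i : ℝ))

section Aux

variable {p : ℕ} [Fact p.Prime] {n : ℕ}

lemma QE.aeval_norm_le_one (f : MvPolynomial (Fin n) ℤ_[p]) (ξ : Fin n → ℚ_[p])
    (hξ : ∀ i, ‖ξ i‖ ≤ 1) : ‖(aeval ξ f : ℚ_[p])‖ ≤ 1 := by
  let x : Fin n → ℤ_[p] := fun i => ⟨ξ i, hξ i⟩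
  have h : ((aeval x f : ℤ_[p]) : ℚ_[p]) = aeval ξ f := by
    have h := MvPolynomial.comp_aeval_apply (f := x) (Algebra.ofId ℤ_[p] ℚ_[p]) f
    simpa using h
  rw [← h]
  exact PadicInt.norm_le_one _

lemma QE.continuous_aeval (f : MvPolynomial (Fin n) ℤ_[p]) :
    Continuous fun ξ : Fin n → ℚ_[p] => (aeval ξ f : ℚ_[p]) := by
  simp only [aeval_def, eval₂_eq_eval_map]
  exact MvPolynomial.continuous_eval _

lemma QE.d_pos (d : ℕ) (w : Fin n → ℕ) (f : MvPolynomial (Fin n) ℤ_[p])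
    (hn : 0 < n) (hw : ∀ i, 0 < w i)
    (hhom : ∀ lam : ℚ_[p], lam ≠ 0 → ∀ ξ : Fin n → ℚ_[p],
      aeval (fun i => lam ^ w i * ξ i) f = lam ^ d * aeval ξ f)
    (hzero : ∀ ξ : Fin n → ℚ_[p], aeval ξ f = 0 ↔ ξ = 0) : 0 < d := by
  by_contra hdne
  have hd0 : d = 0 := by omega
  classical
  have hp1 : (1 : ℝ) < (p : ℝ) := by exact_mod_cast (Fact.out : p.Prime).one_lt
  set i₀ : Fin n := ⟨0, hn⟩
  set e : Fin n → ℚ_[p] := Pi.single i₀ 1 with he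
  have he0 : e ≠ 0 := by
    intro h
    have h2 := congrFun h i₀
    simp [he, Pi.single_eq_same] at h2
  have hfe : aeval e f ≠ 0 := fun h => he0 ((hzero e).mp h)
  have hpQ : (p : ℚ_[p]) ≠ 0 := Nat.cast_ne_zero.mpr (Fact.out : p.Prime).ne_zero
  have key : ∀ m : ℕ, aeval (fun i => ((p : ℚ_[p]) ^ m) ^ w i * e i) f = aeval e f := by
    intro m
    rw [hhom _ (pow_ne_zero _ hpQ), hd0, pow_zero, one_mul]
  have hlim : Filter.Tendsto (fun m : ℕ => (fun i => ((p : ℚ_[p]) ^ m) ^ w i * e i))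
      Filter.atTop (nhds 0) := by
    rw [tendsto_pi_nhds]
    intro i
    have hre : (fun m : ℕ => ((p : ℚ_[p]) ^ m) ^ w i * e i)
        = fun m : ℕ => ((p : ℚ_[p]) ^ w i) ^ m * e i := by
      funext m; rw [← pow_mul, ← pow_mul, Nat.mul_comm]
    rw [hre]
    have hnorm : ‖(p : ℚ_[p]) ^ w i‖ < 1 := by
      rw [Padic.norm_p_pow, zpow_neg, zpow_natCast]
      rw [inv_lt_one₀ (by positivity)]
      exact one_lt_pow₀ hp1 (hw i).ne'
    simpa using (tendsto_pow_atTop_nhds_zero_of_norm_lt_one hnorm).mul_const (e i)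
  have h2 := ((QE.continuous_aeval f).tendsto 0).comp hlim
  have h3 : Filter.Tendsto (fun _ : ℕ => (aeval e f : ℚ_[p])) Filter.atTop
      (nhds (aeval (0 : Fin n → ℚ_[p]) f)) := by
    refine h2.congr fun m => ?_
    simp only [Function.comp_apply, key]
  have h4 : (aeval e f : ℚ_[p]) = aeval (0 : Fin n → ℚ_[p]) f :=
    tendsto_nhds_unique tendsto_const_nhds h3
  rw [h4, (hzero 0).mpr rfl] at hfe
  exact hfe rfl

lemma QE.scaling (w : Fin n → ℕ) (hw : ∀ i, 0 < w i) (ξ : Fin n → ℚ_[p])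
    (hξ1 : ∀ i, ‖ξ i‖ ≤ 1) (hξ0 : ξ ≠ 0) :
    ∃ (k : ℕ) (η : Fin n → ℚ_[p]), (∀ i, ‖η i‖ ≤ 1) ∧
      (∃ i, ((p : ℝ) ^ (Finset.univ.sup w - 1))⁻¹ ≤ ‖η i‖) ∧
      (∀ i, ξ i = ((p : ℚ_[p]) ^ k) ^ (w i) * η i) := by
  classical
  have hp1 : (1 : ℝ) < (p : ℝ) := by
    exact_mod_cast (Fact.out : p.Prime).one_lt
  have hpQ : (p : ℚ_[p]) ≠ 0 := by
    exact_mod_cast Nat.cast_ne_zero.mpr (Fact.out : p.Prime).ne_zero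
  set S : Finset (Fin n) := Finset.univ.filter (fun i => ξ i ≠ 0) with hS
  have hSne : S.Nonempty := by
    obtain ⟨i, hi⟩ := Function.ne_iff.mp hξ0
    have hi' : ξ i ≠ 0 := by simpa using hi
    exact ⟨i, by simp [hS, hi']⟩
  set v : Fin n → ℕ := fun i => ((ξ i).valuation).toNat with hv
  set k : ℕ := S.inf' hSne (fun i => v i / w i) with hk
  refine ⟨k, fun i => ξ i / (p : ℚ_[p]) ^ (k * w i), ?_, ?_, ?_⟩
  · intro i
    by_cases h0 : ξ i = 0
    · simp [h0]
    · have hval : ((ξ i).valuation : ℤ) = (v i : ℤ) :=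
        (Int.toNat_of_nonneg ((Padic.norm_le_one_iff_val_nonneg _).mp (hξ1 i))).symm
      have hnorm : ‖ξ i‖ = (p : ℝ) ^ (-(v i : ℤ)) := by
        rw [Padic.norm_eq_zpow_neg_valuation h0, hval]
      have hkle : k * w i ≤ v i := by
        have h1 : k ≤ v i / w i := Finset.inf'_le _ (by simp [hS, h0])
        calc k * w i ≤ (v i / w i) * w i := by gcongr
          _ ≤ v i := Nat.div_mul_le_self _ _
      rw [norm_div, hnorm, Padic.norm_p_pow, ← zpow_sub₀ (by positivity)]
      apply zpow_le_one_of_nonpos₀ (le_of_lt hp1)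
      omega
  · obtain ⟨i₀, hi₀S, hi₀⟩ := Finset.exists_mem_eq_inf' hSne (fun i => v i / w i)
    have h0 : ξ i₀ ≠ 0 := by simpa [hS] using hi₀S
    have hval : ((ξ i₀).valuation : ℤ) = (v i₀ : ℤ) :=
      (Int.toNat_of_nonneg ((Padic.norm_le_one_iff_val_nonneg _).mp (hξ1 i₀))).symm
    have hnorm : ‖ξ i₀‖ = (p : ℝ) ^ (-(v i₀ : ℤ)) := by
      rw [Padic.norm_eq_zpow_neg_valuation h0, hval]
    refine ⟨i₀, ?_⟩
    rw [norm_div, hnorm, Padic.norm_p_pow, ← zpow_sub₀ (by positivity),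
      ← zpow_natCast (p : ℝ) (Finset.univ.sup w - 1), ← zpow_neg]
    apply zpow_le_zpow_right₀ hp1.le
    have hkk : k = v i₀ / w i₀ := hi₀
    have hwi : 0 < w i₀ := hw i₀
    have hWi : w i₀ ≤ Finset.univ.sup w := Finset.le_sup (Finset.mem_univ i₀)
    have h1 : v i₀ - k * w i₀ < w i₀ := by
      have hmod := Nat.div_add_mod (v i₀) (w i₀)
      have hmlt := Nat.mod_lt (v i₀) hwi
      have hkw : k * w i₀ = w i₀ * (v i₀ / w i₀) := by rw [hkk, mul_comm]
      omega
    have h2 : k * w i₀ ≤ v i₀ := by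
      rw [hkk]; exact Nat.div_mul_le_self _ _
    omega
  · intro i
    rw [← pow_mul]
    field_simp

end Aux

set_option maxHeartbeats 1000000 in
/-- For a quasielliptic `f` there are constants `A₀, A₁ > 0` with
`A₀ Ξ(ξ) ≤ |f(ξ)|_p ≤ A₁ Ξ(ξ)` whenever `‖ξ‖_p ≤ 1`. -/
theorem quasielliptic_bounds_on_unit_ball (p : ℕ) [Fact p.Prime] {n : ℕ}
    (d : ℕ) (w : Fin n → ℕ) (f : MvPolynomial (Fin n) ℤ_[p])
    (hf : IsQuasielliptic p d w f) :
    ∃ A₀ A₁ : ℝ, 0 < A₀ ∧ 0 < A₁ ∧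
      ∀ ξ : Fin n → ℚ_[p], (∀ i, ‖ξ i‖ ≤ 1) →
        A₀ * Xi p d w ξ ≤ ‖(aeval ξ f : ℚ_[p])‖ ∧
        ‖(aeval ξ f : ℚ_[p])‖ ≤ A₁ * Xi p d w ξ := by
  classical
  obtain ⟨hdeg, hw, hhom, hzero⟩ := hf
  rcases Nat.eq_zero_or_pos n with hn | hn
  · subst hn
    refine ⟨1, 1, one_pos, one_pos, fun ξ _ => ?_⟩
    have hξ : ξ = 0 := funext fun i => i.elim0
    have h0 : (aeval ξ f : ℚ_[p]) = 0 := (hzero ξ).mpr hξ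
    have hXi : Xi p d w ξ = 0 := by simp [Xi]
    rw [h0, hXi]
    simp
  have hp1 : (1 : ℝ) < (p : ℝ) := by exact_mod_cast (Fact.out : p.Prime).one_lt
  have hpQ : (p : ℚ_[p]) ≠ 0 := Nat.cast_ne_zero.mpr (Fact.out : p.Prime).ne_zero
  have hd : 0 < d := QE.d_pos d w f hn hw hhom hzero
  set W : ℕ := Finset.univ.sup w with hW
  set ε : ℝ := ((p : ℝ) ^ (W - 1))⁻¹ with hε_def
  have hε : 0 < ε := by positivity
  have hε1 : ε ≤ 1 := by
    rw [hε_def]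
    rw [inv_le_one₀ (by positivity)]
    exact one_le_pow₀ hp1.le
  set K : Set (Fin n → ℚ_[p]) :=
    {η : Fin n → ℚ_[p] | (∀ i, ‖η i‖ ≤ 1) ∧ ∃ i, ε ≤ ‖η i‖} with hK_def
  have hc1 : IsClosed {η : Fin n → ℚ_[p] | ∀ i, ‖η i‖ ≤ 1} := by
    have h : {η : Fin n → ℚ_[p] | ∀ i, ‖η i‖ ≤ 1} = ⋂ i, {η | ‖η i‖ ≤ 1} := by
      ext; simp
    rw [h]
    exact isClosed_iInter fun i => isClosed_le ((continuous_apply i).norm) continuous_const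
  have hc2 : IsClosed {η : Fin n → ℚ_[p] | ∃ i, ε ≤ ‖η i‖} := by
    have h : {η : Fin n → ℚ_[p] | ∃ i, ε ≤ ‖η i‖} = ⋃ i, {η | ε ≤ ‖η i‖} := by
      ext; simp
    rw [h]
    exact isClosed_iUnion_of_finite fun i =>
      isClosed_le continuous_const ((continuous_apply i).norm)
  have hKcl : IsClosed K := by
    rw [hK_def, Set.setOf_and]
    exact hc1.inter hc2
  have hKcomp : IsCompact K := by
    refine (isCompact_univ_pi fun _ : Fin n => isCompact_closedBall (0 : ℚ_[p]) 1).of_isClosed_subset hKcl ?_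
    intro η hη
    rw [Set.mem_pi]
    intro i _
    rw [Metric.mem_closedBall, dist_zero_right]
    exact hη.1 i
  have hKne : K.Nonempty := by
    refine ⟨Pi.single ⟨0, hn⟩ 1, ?_, ⟨⟨0, hn⟩, ?_⟩⟩
    · intro i
      rcases eq_or_ne i ⟨0, hn⟩ with h | h
      · subst h; simp
      · simp [Pi.single_eq_of_ne h]
    · simp [Pi.single_eq_same]
      exact hε1
  obtain ⟨η₀, hη₀K, hmin⟩ := hKcomp.exists_isMinOn hKne
    ((QE.continuous_aeval f).norm.continuousOn)
  set c : ℝ := ‖(aeval η₀ f : ℚ_[p])‖ with hc_def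
  have hc : 0 < c := by
    rw [hc_def, norm_pos_iff]
    intro h
    have hη₀0 : η₀ = 0 := (hzero η₀).mp h
    obtain ⟨j, hj⟩ := hη₀K.2
    rw [hη₀0] at hj
    simp at hj
    linarith
  have hnR : (0 : ℝ) < n := by exact_mod_cast hn
  refine ⟨c / n, (ε ^ d)⁻¹, by positivity, by positivity, fun ξ hξ1 => ?_⟩
  by_cases hξ0 : ξ = 0
  · subst hξ0
    have h0 : (aeval (0 : Fin n → ℚ_[p]) f : ℚ_[p]) = 0 := (hzero 0).mpr rfl
    have hXi0 : Xi p d w 0 = 0 := by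
      rw [Xi]
      refine Finset.sum_eq_zero fun i _ => ?_
      have : ((d : ℝ) / (w i : ℝ)) ≠ 0 := by
        apply ne_of_gt
        apply div_pos (by exact_mod_cast hd) (by exact_mod_cast hw i)
      simp [Real.zero_rpow this]
    rw [h0, hXi0]
    simp
  obtain ⟨k, η, hη1, hη2, hξeq⟩ := QE.scaling w hw ξ hξ1 hξ0
  set t : ℝ := ((p : ℝ) ^ (k * d))⁻¹ with ht_def
  have ht : 0 < t := by positivity
  have hηK : η ∈ K := ⟨hη1, hη2⟩
  have hnormf : ‖(aeval ξ f : ℚ_[p])‖ = t * ‖(aeval η f : ℚ_[p])‖ := by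
    have hxe : ξ = fun i => ((p : ℚ_[p]) ^ k) ^ (w i) * η i := funext hξeq
    rw [hxe, hhom _ (pow_ne_zero _ hpQ) η, norm_mul]
    congr 1
    rw [← pow_mul, Padic.norm_p_pow, zpow_neg, zpow_natCast]
  have hp0 : (0 : ℝ) ≤ (p : ℝ) := by positivity
  have hXi : Xi p d w ξ = t * Xi p d w η := by
    rw [Xi, Xi, Finset.mul_sum]
    refine Finset.sum_congr rfl fun i _ => ?_
    have hwi : ((w i : ℝ)) ≠ 0 := Nat.cast_ne_zero.mpr (hw i).ne'
    rw [hξeq i, norm_mul, ← pow_mul, Padic.norm_p_pow, zpow_neg, zpow_natCast]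
    rw [Real.mul_rpow (by positivity) (norm_nonneg _)]
    congr 1
    calc (((p : ℝ) ^ (k * w i))⁻¹) ^ ((d : ℝ) / (w i : ℝ))
        = ((p : ℝ) ^ (-((k * w i : ℕ) : ℝ))) ^ ((d : ℝ) / (w i : ℝ)) := by
          rw [← Real.rpow_natCast (p : ℝ) (k * w i), ← Real.rpow_neg hp0]
      _ = (p : ℝ) ^ ((-((k * w i : ℕ) : ℝ)) * ((d : ℝ) / (w i : ℝ))) := by
          rw [← Real.rpow_mul hp0]
      _ = (p : ℝ) ^ (-(((k * d : ℕ)) : ℝ)) := by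
          congr 1
          push_cast
          field_simp
      _ = t := by
          rw [Real.rpow_neg hp0, Real.rpow_natCast]
  have hXiub : Xi p d w η ≤ n := by
    calc Xi p d w η ≤ ∑ _i : Fin n, (1 : ℝ) := by
          rw [Xi]
          refine Finset.sum_le_sum fun i _ => ?_
          exact Real.rpow_le_one (norm_nonneg _) (hη1 i) (by positivity)
      _ = n := by simp
  have hXilb : ε ^ d ≤ Xi p d w η := by
    obtain ⟨j, hj⟩ := hη2
    have h1 : ε ^ d ≤ ‖η j‖ ^ ((d : ℝ) / (w j : ℝ)) := by
      have hwj1 : (1 : ℝ) ≤ (w j : ℝ) := by exact_mod_cast hw j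
      calc ε ^ d = ε ^ (d : ℝ) := (Real.rpow_natCast ε d).symm
        _ ≤ ε ^ ((d : ℝ) / (w j : ℝ)) :=
            Real.rpow_le_rpow_of_exponent_ge hε hε1 (div_le_self (by positivity) hwj1)
        _ ≤ ‖η j‖ ^ ((d : ℝ) / (w j : ℝ)) :=
            Real.rpow_le_rpow hε.le hj (by positivity)
    refine h1.trans ?_
    rw [Xi]
    exact Finset.single_le_sum (f := fun i => ‖η i‖ ^ ((d : ℝ) / (w i : ℝ)))
      (fun i _ => Real.rpow_nonneg (norm_nonneg (η i)) _)
      (Finset.mem_univ j)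
  have hfub : ‖(aeval η f : ℚ_[p])‖ ≤ 1 := QE.aeval_norm_le_one f η hη1
  have hflb : c ≤ ‖(aeval η f : ℚ_[p])‖ := by
    exact isMinOn_iff.mp hmin η hηK
  constructor
  · rw [hnormf, hXi]
    calc c / n * (t * Xi p d w η) ≤ c / n * (t * n) := by gcongr
      _ = t * c := by field_simp
      _ ≤ t * ‖(aeval η f : ℚ_[p])‖ := by gcongr
  · rw [hnormf, hXi]
    calc t * ‖(aeval η f : ℚ_[p])‖ ≤ t * 1 := by gcongr
      _ = (ε ^ d)⁻¹ * (t * ε ^ d) := by field_simp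
      _ ≤ (ε ^ d)⁻¹ * (t * Xi p d w η) := by gcongr
end

section
/- Let f(ξ) be a quasielliptic polynomial of degree d with respect to w with ℤ_p coefficients, and set Ξ(ξ) = Σ_{i=1}^{n} |ξ_i|_p^{d/w_i}. Then there exist positive constants A₀, A₁ such that A₀ Ξ(ξ) ≤ |f(ξ)|_p ≤ A₁ Ξ(ξ) for all ξ ∈ ℚ_pⁿ. -/
/-!
Both `‖f ξ‖` and `Ξ ξ` are multiplied by `‖λ‖ ^ d` under the weighted scaling
`ξ ↦ (λ ^ wᵢ ξᵢ)ᵢ`, so their ratio is invariant under it. Scaling by a suitable power of `p`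
moves any `ξ ≠ 0` into the shell `p⁻ᵈ ≤ Ξ ≤ 1`, which is compact and misses `0`. On this shell
the ratio is continuous and positive, so its minimum and maximum are the two constants.
-/

open MvPolynomial

open Filter Topology Set

theorem MvPolynomial.continuous_aeval {σ R A : Type*} [CommSemiring R] [CommSemiring A]
    [Algebra R A] [TopologicalSpace A] [IsTopologicalSemiring A] (f : MvPolynomial σ R) :
    Continuous fun x : σ → A => aeval x f := by
  simpa only [aeval_def, eval₂_eq_eval_map] using continuous_eval (map (algebraMap R A) f)

theorem IsCompact.exists_pos_bounds_of_forall_exists_eq {X : Type*} [TopologicalSpace X]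
    {S T : Set X} {g : X → ℝ} (hS : IsCompact S) (hg : ContinuousOn g S)
    (hpos : ∀ y ∈ S, 0 < g y) (hT : T.Nonempty) (hST : ∀ x ∈ T, ∃ y ∈ S, g y = g x) :
    ∃ m M : ℝ, 0 < m ∧ 0 < M ∧ ∀ x ∈ T, m ≤ g x ∧ g x ≤ M := by
  obtain ⟨y, hyS, -⟩ := hST hT.some hT.some_mem
  obtain ⟨y₀, hy₀, hmin⟩ := hS.exists_isMinOn ⟨y, hyS⟩ hg
  obtain ⟨y₁, hy₁, hmax⟩ := hS.exists_isMaxOn ⟨y, hyS⟩ hg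
  refine ⟨g y₀, g y₁, hpos y₀ hy₀, hpos y₁ hy₁, fun x hx => ?_⟩
  obtain ⟨y, hy, hyx⟩ := hST x hx
  exact hyx ▸ ⟨hmin hy, hmax hy⟩

section Xi

variable {p : ℕ} [Fact p.Prime] {n : ℕ} {d : ℕ} {w : Fin n → ℕ}

theorem continuous_Xi : Continuous (Xi p d w) :=
  continuous_finsetSum _ fun i _ =>
    (Real.continuous_rpow_const (by positivity)).comp (continuous_apply i).norm

theorem Xi_zero (hd : d ≠ 0) (hw : ∀ i, w i ≠ 0) : Xi p d w 0 = 0 :=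
  Finset.sum_eq_zero fun i _ => by
    rw [Pi.zero_apply, norm_zero, Real.zero_rpow (by simp [hd, hw i])]

theorem Xi_pos {ξ : Fin n → ℚ_[p]} (hξ : ξ ≠ 0) : 0 < Xi p d w ξ := by
  obtain ⟨i, hi⟩ := Function.ne_iff.mp hξ
  exact Finset.sum_pos' (fun j _ => by positivity)
    ⟨i, Finset.mem_univ i, Real.rpow_pos_of_pos (norm_pos_iff.mpr hi) _⟩

theorem Xi_weighted_scale (hw : ∀ i, w i ≠ 0) (lam : ℚ_[p]) (ξ : Fin n → ℚ_[p]) :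
    Xi p d w (fun i => lam ^ w i * ξ i) = ‖lam‖ ^ d * Xi p d w ξ := by
  rw [Xi, Xi, Finset.mul_sum]
  refine Finset.sum_congr rfl fun i _ => ?_
  rw [norm_mul, norm_pow, Real.mul_rpow (by positivity) (norm_nonneg _),
    ← Real.rpow_natCast, ← Real.rpow_mul (norm_nonneg _), ← Real.rpow_natCast,
    mul_div_cancel₀ _ (Nat.cast_ne_zero.mpr (hw i))]

theorem norm_le_one_of_Xi_le_one (hd : d ≠ 0) (hw : ∀ i, w i ≠ 0) {η : Fin n → ℚ_[p]}
    (h : Xi p d w η ≤ 1) : ‖η‖ ≤ 1 := by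
  refine (pi_norm_le_iff_of_nonneg zero_le_one).mpr fun i => not_lt.mp fun hi => ?_
  have hterm : ‖η i‖ ^ ((d : ℝ) / w i) ≤ Xi p d w η :=
    Finset.single_le_sum (f := fun j => ‖η j‖ ^ ((d : ℝ) / w j))
      (fun j _ => by positivity) (Finset.mem_univ i)
  have : 1 < ‖η i‖ ^ ((d : ℝ) / w i) :=
    Real.one_lt_rpow hi <| div_pos (by simp [Nat.pos_of_ne_zero hd])
      (by simp [Nat.pos_of_ne_zero (hw i)])
  linarith

theorem isCompact_Xi_preimage_Icc (hd : d ≠ 0) (hw : ∀ i, w i ≠ 0) (a : ℝ) :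
    IsCompact (Xi p d w ⁻¹' Icc a 1) :=
  Metric.isCompact_of_isClosed_isBounded (isClosed_Icc.preimage continuous_Xi)
    ((Metric.isBounded_closedBall (x := 0) (r := 1)).subset fun η hη => by
      simpa using norm_le_one_of_Xi_le_one hd hw hη.2)

theorem exists_Xi_weighted_scale_mem_Icc (hd : d ≠ 0) (hw : ∀ i, w i ≠ 0)
    {ξ : Fin n → ℚ_[p]} (hξ : ξ ≠ 0) :
    ∃ lam : ℚ_[p], lam ≠ 0 ∧
      Xi p d w (fun i => lam ^ w i * ξ i) ∈ Icc ((p : ℝ) ^ d)⁻¹ 1 := by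
  have hp : (1 : ℝ) < p := mod_cast (Fact.out : p.Prime).one_lt
  obtain ⟨m, hlo, hhi⟩ := exists_mem_Ioc_zpow (Xi_pos hξ) (one_lt_pow₀ hp hd)
  refine ⟨(p : ℚ_[p]) ^ (m + 1),
    zpow_ne_zero _ (by exact_mod_cast (Fact.out : p.Prime).ne_zero), ?_⟩
  have hy : (0 : ℝ) < ((p : ℝ) ^ d) ^ (m + 1) := by positivity
  have hnorm : ‖(p : ℚ_[p]) ^ (m + 1)‖ ^ d = (((p : ℝ) ^ d) ^ (m + 1))⁻¹ := by
    rw [norm_zpow, Padic.norm_p, inv_zpow, inv_pow, ← zpow_natCast, ← zpow_natCast,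
      ← zpow_mul, ← zpow_mul, mul_comm]
  rw [Xi_weighted_scale hw, hnorm, inv_mul_eq_div]
  refine ⟨?_, (div_le_one hy).mpr hhi⟩
  rw [le_div_iff₀ hy, zpow_add_one₀ (by positivity), mul_comm (((p : ℝ) ^ d) ^ m),
    inv_mul_cancel_left₀ (by positivity)]
  exact hlo.le

end Xi

namespace IsQuasielliptic

variable {p : ℕ} [Fact p.Prime] {n d : ℕ} {w : Fin n → ℕ} {f : MvPolynomial (Fin n) ℤ_[p]}

theorem weight_ne_zero (hf : IsQuasielliptic p d w f) (i : Fin n) : w i ≠ 0 :=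
  (hf.2.1 i).ne'

theorem aeval_eq_zero_iff (hf : IsQuasielliptic p d w f) {ξ : Fin n → ℚ_[p]} :
    aeval ξ f = 0 ↔ ξ = 0 :=
  hf.2.2.2 ξ

theorem aeval_weighted_scale (hf : IsQuasielliptic p d w f) {lam : ℚ_[p]} (hlam : lam ≠ 0)
    (ξ : Fin n → ℚ_[p]) : aeval (fun i => lam ^ w i * ξ i) f = lam ^ d * aeval ξ f :=
  hf.2.2.1 lam hlam ξ

theorem aeval_zero (hf : IsQuasielliptic p d w f) : aeval (0 : Fin n → ℚ_[p]) f = 0 :=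
  hf.aeval_eq_zero_iff.mpr rfl

theorem degree_pos [Nonempty (Fin n)] (hf : IsQuasielliptic p d w f) : 0 < d := by
  refine Nat.pos_of_ne_zero fun hd => ?_
  obtain ⟨ξ, hξ⟩ := exists_ne (0 : Fin n → ℚ_[p])
  -- for `d = 0`, `f` is constant on the curve `λ ↦ λ^w ξ`, which runs into `0` as `λ → 0`
  have hcurve : Continuous fun lam : ℚ_[p] => aeval (fun i => lam ^ w i * ξ i) f :=
    (continuous_aeval f).comp (continuous_pi fun i => (continuous_pow _).mul continuous_const)
  have hconst : Tendsto (fun lam : ℚ_[p] => aeval (fun i => lam ^ w i * ξ i) f) (𝓝[≠] 0)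
      (𝓝 (aeval ξ f)) :=
    tendsto_const_nhds.congr' (eventually_nhdsWithin_of_forall fun lam hlam => by
      simp only [hf.aeval_weighted_scale hlam ξ, hd, pow_zero, one_mul])
  have hzero : Tendsto (fun lam : ℚ_[p] => aeval (fun i => lam ^ w i * ξ i) f) (𝓝[≠] 0)
      (𝓝 0) := by
    have := (hcurve.tendsto 0).mono_left (nhdsWithin_le_nhds (s := {0}ᶜ))
    simpa only [zero_pow (hf.weight_ne_zero _), zero_mul, ← Pi.zero_def,
      hf.aeval_zero] using this
  exact hξ (hf.aeval_eq_zero_iff.mp (tendsto_nhds_unique hconst hzero))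

theorem norm_aeval_div_Xi_weighted_scale (hf : IsQuasielliptic p d w f) {lam : ℚ_[p]}
    (hlam : lam ≠ 0) (ξ : Fin n → ℚ_[p]) :
    ‖aeval (fun i => lam ^ w i * ξ i) f‖ / Xi p d w (fun i => lam ^ w i * ξ i) =
      ‖aeval ξ f‖ / Xi p d w ξ := by
  rw [hf.aeval_weighted_scale hlam ξ, Xi_weighted_scale hf.weight_ne_zero, norm_mul, norm_pow,
    mul_div_mul_left _ _ (pow_ne_zero _ (norm_ne_zero_iff.mpr hlam))]

theorem norm_aeval_div_Xi_pos [Nonempty (Fin n)] (hf : IsQuasielliptic p d w f)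
    {η : Fin n → ℚ_[p]} (hη : 0 < Xi p d w η) : 0 < ‖aeval η f‖ / Xi p d w η := by
  have hη0 : η ≠ 0 := ne_of_apply_ne (Xi p d w) <| by
    rw [Xi_zero hf.degree_pos.ne' hf.weight_ne_zero]
    exact hη.ne'
  exact div_pos (norm_pos_iff.mpr (mt hf.aeval_eq_zero_iff.mp hη0)) hη

end IsQuasielliptic

/-- For a quasielliptic `f` there are constants `A₀, A₁ > 0` with
`A₀ Ξ(ξ) ≤ |f(ξ)|_p ≤ A₁ Ξ(ξ)` for all `ξ ∈ ℚ_pⁿ`. -/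
theorem quasielliptic_bounds (p : ℕ) [Fact p.Prime] {n : ℕ}
    (d : ℕ) (w : Fin n → ℕ) (f : MvPolynomial (Fin n) ℤ_[p])
    (hf : IsQuasielliptic p d w f) :
    ∃ A₀ A₁ : ℝ, 0 < A₀ ∧ 0 < A₁ ∧
      ∀ ξ : Fin n → ℚ_[p],
        A₀ * Xi p d w ξ ≤ ‖(aeval ξ f : ℚ_[p])‖ ∧
        ‖(aeval ξ f : ℚ_[p])‖ ≤ A₁ * Xi p d w ξ := by
  rcases isEmpty_or_nonempty (Fin n) with hn | hn
  · refine ⟨1, 1, one_pos, one_pos, fun ξ => ?_⟩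
    rw [Subsingleton.elim ξ 0, hf.aeval_zero]
    simp [Xi]
  have hd := hf.degree_pos.ne'
  have hw := hf.weight_ne_zero
  have hp : (0 : ℝ) < p := Nat.cast_pos.mpr (Fact.out : p.Prime).pos
  set S := Xi p d w ⁻¹' Icc ((p : ℝ) ^ d)⁻¹ 1
  have hXi_pos : ∀ η ∈ S, 0 < Xi p d w η := fun η hη => lt_of_lt_of_le (by positivity) hη.1
  have hS : IsCompact S := isCompact_Xi_preimage_Icc hd hw _
  obtain ⟨m, M, hm, hM, hbounds⟩ := hS.exists_pos_bounds_of_forall_exists_eq (T := {ξ | ξ ≠ 0})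
    ((continuous_aeval f).norm.continuousOn.div continuous_Xi.continuousOn
      fun η hη => (hXi_pos η hη).ne')
    (fun η hη => hf.norm_aeval_div_Xi_pos (hXi_pos η hη)) (exists_ne 0)
    fun ξ hξ =>
      let ⟨_, hlam, hmem⟩ := exists_Xi_weighted_scale_mem_Icc hd hw hξ
      ⟨_, hmem, hf.norm_aeval_div_Xi_weighted_scale hlam ξ⟩
  refine ⟨m, M, hm, hM, fun ξ => ?_⟩
  rcases eq_or_ne ξ 0 with rfl | hξ
  · simp [Xi_zero hd hw, hf.aeval_zero]
  rw [← le_div_iff₀ (Xi_pos hξ), ← div_le_iff₀ (Xi_pos hξ)]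
  exact hbounds ξ hξ
end

section
/- Let F(ξ,x) = f(ξ) + Σ_{⟨k,w⟩ ≤ d−1} c_k(x) ξ^k be a semi-quasielliptic polynomial, where f is quasielliptic of degree d with respect to w and each coefficient function c_k : ℚ_pⁿ → ℚ_p satisfies sup_x |c_k(x)|_p < ∞. Then there exist positive constants A₀, A₁ and M₀ ∈ ℕ, independent of x, such that A₀ Ξ(ξ) ≤ |F(ξ,x)|_p ≤ A₁ Ξ(ξ) for all x ∈ ℚ_pⁿ and all ξ with ‖ξ‖_p ≥ p^{M₀}. -/
open MvPolynomial

/-!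
Work with the weighted quasi-norm `ρ(ξ) = max_i ‖ξ_i‖^{1/w_i}` (`quasiNorm`), which satisfies
`ρ^d ≤ Ξ ≤ n ρ^d` and scales by `‖a‖` under the dilation `ξ ↦ (a^{w_i} ξ_i)_i`, while `‖f‖` scales
by `‖a‖^d`. On the compact shell `1 ≤ ρ ≤ p` the continuous function `‖f‖` is bounded, and bounded
away from `0` because `f` vanishes only at `0`; every `ξ ≠ 0` is dilated into the shell by a power
of `p`, so `‖f(ξ)‖ ≍ ρ(ξ)^d` for all `ξ ≠ 0`. A monomial satisfies `‖ξ^k‖ ≤ ρ^{⟨k,w⟩} ≤ ρ^{d-1}`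
for `ρ ≥ 1`, so the lower-order terms are `O(ρ^{d-1})` uniformly in `x`, hence below half the lower
bound for `‖f‖` once `ρ` is large, and `ρ` is large as soon as one `‖ξ_i‖ ≥ p^{M₀}`.
-/

open Filter Topology

namespace MvPolynomial

theorem continuous_aeval_s10 {σ R A : Type*} [CommSemiring R] [CommSemiring A] [Algebra R A]
    [TopologicalSpace A] [IsTopologicalSemiring A] (f : MvPolynomial σ R) :
    Continuous fun x : σ → A => aeval x f := by
  simp only [aeval_def, eval₂_eq_eval_map]
  exact continuous_eval _

end MvPolynomial

section QuasiNorm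

variable {ι 𝕜 : Type*} [NormedField 𝕜] {w : ι → ℕ}

noncomputable def quasiNorm (w : ι → ℕ) (ξ : ι → 𝕜) : ℝ :=
  ⨆ i, ‖ξ i‖ ^ ((w i : ℝ)⁻¹)

lemma quasiNorm_nonneg (ξ : ι → 𝕜) : 0 ≤ quasiNorm w ξ :=
  Real.iSup_nonneg fun _ => Real.rpow_nonneg (norm_nonneg _) _

lemma quasiNorm_pow_mul (hw : ∀ i, 0 < w i) (a : 𝕜) (ξ : ι → 𝕜) :
    quasiNorm w (fun i => a ^ w i * ξ i) = ‖a‖ * quasiNorm w ξ := by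
  rw [quasiNorm, quasiNorm, Real.mul_iSup_of_nonneg (norm_nonneg a)]
  refine iSup_congr fun i => ?_
  rw [norm_mul, norm_pow, Real.mul_rpow (by positivity) (norm_nonneg _),
    Real.pow_rpow_inv_natCast (norm_nonneg _) (hw i).ne']

lemma quasiNorm_zero (hw : ∀ i, 0 < w i) : quasiNorm w (0 : ι → 𝕜) = 0 := by
  simp [quasiNorm, (hw _).ne']

variable [Fintype ι]

lemma rpow_inv_le_quasiNorm (ξ : ι → 𝕜) (i : ι) : ‖ξ i‖ ^ ((w i : ℝ)⁻¹) ≤ quasiNorm w ξ :=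
  le_ciSup (f := fun i => ‖ξ i‖ ^ ((w i : ℝ)⁻¹)) (Finite.bddAbove_range _) i

lemma norm_le_quasiNorm_pow (ξ : ι → 𝕜) {i : ι} (hi : w i ≠ 0) :
    ‖ξ i‖ ≤ quasiNorm w ξ ^ w i :=
  calc ‖ξ i‖ = (‖ξ i‖ ^ ((w i : ℝ)⁻¹)) ^ w i :=
        (Real.rpow_inv_natCast_pow (norm_nonneg _) hi).symm
    _ ≤ quasiNorm w ξ ^ w i := by gcongr; exact rpow_inv_le_quasiNorm ξ i

lemma le_quasiNorm_of_pow_le_norm {ξ : ι → 𝕜} {i : ι} (hi : w i ≠ 0) {r : ℝ} (hr : 0 ≤ r)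
    (h : r ^ w i ≤ ‖ξ i‖) : r ≤ quasiNorm w ξ :=
  calc r = (r ^ w i) ^ ((w i : ℝ)⁻¹) := (Real.pow_rpow_inv_natCast hr hi).symm
    _ ≤ ‖ξ i‖ ^ ((w i : ℝ)⁻¹) := by gcongr
    _ ≤ quasiNorm w ξ := rpow_inv_le_quasiNorm ξ i

lemma quasiNorm_pos {ξ : ι → 𝕜} (hξ : ξ ≠ 0) : 0 < quasiNorm w ξ := by
  obtain ⟨i, hi⟩ := Function.ne_iff.mp hξ
  exact (Real.rpow_pos_of_pos (norm_pos_iff.mpr hi) _).trans_le (rpow_inv_le_quasiNorm ξ i)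

lemma continuous_quasiNorm : Continuous (quasiNorm w : (ι → 𝕜) → ℝ) := by
  cases isEmpty_or_nonempty ι
  · have : quasiNorm w = fun _ : ι → 𝕜 => (0 : ℝ) := funext fun ξ => by simp [quasiNorm]
    rw [this]
    exact continuous_const
  · have : quasiNorm w = fun ξ : ι → 𝕜 =>
        Finset.univ.sup' Finset.univ_nonempty fun i => ‖ξ i‖ ^ ((w i : ℝ)⁻¹) :=
      funext fun ξ => (Finset.sup'_univ_eq_ciSup _).symm
    rw [this]
    exact Continuous.finset_sup'_apply _ fun i _ =>
      (continuous_apply i).norm.rpow_const fun _ => Or.inr (by positivity)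

lemma isCompact_quasiNorm_le [ProperSpace 𝕜] (hw : ∀ i, 0 < w i) (r : ℝ) :
    IsCompact {ξ : ι → 𝕜 | quasiNorm w ξ ≤ r} := by
  refine (isCompact_univ_pi fun i => isCompact_closedBall (0 : 𝕜) (r ^ w i)).of_isClosed_subset
    (isClosed_le continuous_quasiNorm continuous_const) fun ξ hξ i _ => ?_
  rw [Metric.mem_closedBall, dist_zero_right]
  exact (norm_le_quasiNorm_pow ξ (hw i).ne').trans (pow_le_pow_left₀ (quasiNorm_nonneg ξ) hξ _)

lemma exists_le_quasiNorm_of_le_norm (hw : ∀ i, 0 < w i) (R : ℝ) :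
    ∃ M : ℝ, ∀ (ξ : ι → 𝕜) (i : ι), M ≤ ‖ξ i‖ → R ≤ quasiNorm w ξ := by
  refine ⟨max R 1 ^ ∑ i, w i, fun ξ i hi => ?_⟩
  refine (le_max_left R 1).trans (le_quasiNorm_of_pow_le_norm (hw i).ne' (by positivity) ?_)
  exact (pow_le_pow_right₀ (le_max_right R 1)
    (Finset.single_le_sum (fun j _ => Nat.zero_le (w j)) (Finset.mem_univ i))).trans hi

lemma norm_prod_pow_le_quasiNorm_pow (hw : ∀ i, 0 < w i) (ξ : ι → 𝕜) (k : ι → ℕ) :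
    ‖∏ i, ξ i ^ k i‖ ≤ quasiNorm w ξ ^ ∑ i, k i * w i := by
  rw [norm_prod, ← Finset.prod_pow_eq_pow_sum]
  refine Finset.prod_le_prod (fun i _ => norm_nonneg _) fun i _ => ?_
  rw [norm_pow, mul_comm, pow_mul]
  gcongr
  exact norm_le_quasiNorm_pow ξ (hw i).ne'

lemma exists_norm_sum_le_mul_quasiNorm_pow {X : Type*} (hw : ∀ i, 0 < w i)
    {S : Finset (ι →₀ ℕ)} {e : ℕ} (hS : ∀ k ∈ S, ∑ i, k i * w i ≤ e)
    {c : (ι →₀ ℕ) → X → 𝕜} (hc : ∀ k ∈ S, ∃ C : ℝ, ∀ x, ‖c k x‖ ≤ C) :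
    ∃ C : ℝ, ∀ x (ξ : ι → 𝕜), 1 ≤ quasiNorm w ξ →
      ‖∑ k ∈ S, c k x * ∏ i, ξ i ^ k i‖ ≤ C * quasiNorm w ξ ^ e := by
  choose! C hC using hc
  refine ⟨∑ k ∈ S, |C k|, fun x ξ hξ => ?_⟩
  calc ‖∑ k ∈ S, c k x * ∏ i, ξ i ^ k i‖ ≤ ∑ k ∈ S, ‖c k x‖ * ‖∏ i, ξ i ^ k i‖ := by
        simpa only [norm_mul] using norm_sum_le S fun k => c k x * ∏ i, ξ i ^ k i
    _ ≤ ∑ k ∈ S, |C k| * quasiNorm w ξ ^ e := by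
        refine Finset.sum_le_sum fun k hk => mul_le_mul ((hC k hk x).trans (le_abs_self _))
          ((norm_prod_pow_le_quasiNorm_pow hw ξ k).trans (pow_le_pow_right₀ hξ (hS k hk)))
          (norm_nonneg _) (abs_nonneg _)
    _ = (∑ k ∈ S, |C k|) * quasiNorm w ξ ^ e := (Finset.sum_mul _ _ _).symm

lemma exists_norm_sum_le_eps_mul_quasiNorm_pow {X : Type*} (hw : ∀ i, 0 < w i)
    {S : Finset (ι →₀ ℕ)} {e : ℕ} (hS : ∀ k ∈ S, ∑ i, k i * w i ≤ e)
    {c : (ι →₀ ℕ) → X → 𝕜} (hc : ∀ k ∈ S, ∃ C : ℝ, ∀ x, ‖c k x‖ ≤ C) {ε : ℝ} (hε : 0 < ε) :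
    ∃ R : ℝ, ∀ x (ξ : ι → 𝕜), R ≤ quasiNorm w ξ →
      ‖∑ k ∈ S, c k x * ∏ i, ξ i ^ k i‖ ≤ ε * quasiNorm w ξ ^ (e + 1) := by
  obtain ⟨C, hbound⟩ := exists_norm_sum_le_mul_quasiNorm_pow hw hS hc
  refine ⟨max 1 (C / ε), fun x ξ hξ => ?_⟩
  have hCε : C ≤ ε * quasiNorm w ξ := (div_le_iff₀' hε).mp ((le_max_right _ _).trans hξ)
  calc ‖∑ k ∈ S, c k x * ∏ i, ξ i ^ k i‖ ≤ C * quasiNorm w ξ ^ e :=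
        hbound x ξ ((le_max_left _ _).trans hξ)
    _ ≤ ε * quasiNorm w ξ * quasiNorm w ξ ^ e :=
        mul_le_mul_of_nonneg_right hCε (pow_nonneg (quasiNorm_nonneg ξ) e)
    _ = ε * quasiNorm w ξ ^ (e + 1) := by ring

end QuasiNorm

section Xi

variable {p : ℕ} [Fact p.Prime] {n : ℕ} {w : Fin n → ℕ}

lemma quasiNorm_pow_le_Xi [Nonempty (Fin n)] (d : ℕ) (ξ : Fin n → ℚ_[p]) :
    quasiNorm w ξ ^ d ≤ Xi p d w ξ := by
  obtain ⟨j, hj⟩ := exists_eq_ciSup_of_finite (f := fun i => ‖ξ i‖ ^ ((w i : ℝ)⁻¹))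
  rw [quasiNorm, ← hj, ← Real.rpow_natCast, ← Real.rpow_mul (norm_nonneg _), inv_mul_eq_div]
  exact Finset.single_le_sum (f := fun i => ‖ξ i‖ ^ ((d : ℝ) / w i))
    (fun i _ => by positivity) (Finset.mem_univ j)

lemma Xi_le_card_mul_quasiNorm_pow (hw : ∀ i, 0 < w i) (d : ℕ) (ξ : Fin n → ℚ_[p]) :
    Xi p d w ξ ≤ n * quasiNorm w ξ ^ d := by
  calc Xi p d w ξ ≤ ∑ _i : Fin n, quasiNorm w ξ ^ d := Finset.sum_le_sum fun i _ => ?_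
    _ = n * quasiNorm w ξ ^ d := by simp
  have hwi : (w i : ℝ) ≠ 0 := by exact_mod_cast (hw i).ne'
  calc ‖ξ i‖ ^ ((d : ℝ) / w i) ≤ (quasiNorm w ξ ^ w i) ^ ((d : ℝ) / w i) := by
        gcongr; exact norm_le_quasiNorm_pow ξ (hw i).ne'
    _ = quasiNorm w ξ ^ d := by
        rw [← Real.rpow_natCast, ← Real.rpow_mul (quasiNorm_nonneg ξ), mul_div_cancel₀ _ hwi,
          Real.rpow_natCast]

end Xi

namespace IsQuasielliptic

variable {p : ℕ} [Fact p.Prime] {n d : ℕ} {w : Fin n → ℕ} {f : MvPolynomial (Fin n) ℤ_[p]}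

lemma degree_ne_zero [Nonempty (Fin n)] (hf : IsQuasielliptic p d w f) : d ≠ 0 := by
  rintro rfl
  obtain ⟨-, hw, hhom, hzero⟩ := hf
  let ξ : Fin n → ℚ_[p] := fun _ => 1
  have hξ : aeval ξ f ≠ 0 := fun h =>
    one_ne_zero (congrFun ((hzero ξ).mp h) (Classical.arbitrary _))
  -- in degree zero `f` is constant along the dilations `a ↦ (a^{w_i} ξ_i)_i`, which tend to `0`
  have hdil : Tendsto (fun a : ℚ_[p] => fun i => a ^ w i * ξ i) (𝓝[≠] 0) (𝓝 0) := by
    have hcont : Continuous fun a : ℚ_[p] => fun i => a ^ w i * ξ i := by fun_prop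
    convert (hcont.tendsto 0).mono_left nhdsWithin_le_nhds using 2
    ext i
    simp [zero_pow (hw i).ne']
  have hlim := ((continuous_aeval_s10 f).tendsto 0).comp hdil
  rw [(hzero 0).mpr rfl] at hlim
  refine hξ (tendsto_nhds_unique (tendsto_const_nhds.congr' ?_) hlim)
  filter_upwards [self_mem_nhdsWithin] with a ha
  simp [hhom a ha]

lemma exists_bounds_on_shell (hf : IsQuasielliptic p d w f) :
    ∃ A B : ℝ, 0 < A ∧ 0 < B ∧ ∀ ξ : Fin n → ℚ_[p], 1 ≤ quasiNorm w ξ → quasiNorm w ξ ≤ p →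
      A * quasiNorm w ξ ^ d ≤ ‖aeval ξ f‖ ∧ ‖aeval ξ f‖ ≤ B * quasiNorm w ξ ^ d := by
  obtain ⟨-, hw, -, hzero⟩ := hf
  let K := {ξ : Fin n → ℚ_[p] | quasiNorm w ξ ≤ p} ∩ {ξ | 1 ≤ quasiNorm w ξ}
  have hK : IsCompact K :=
    (isCompact_quasiNorm_le hw p).inter_right (isClosed_le continuous_const continuous_quasiNorm)
  have hcont := (continuous_aeval_s10 (A := ℚ_[p]) f).norm.continuousOn (s := K)
  have hK0 : ∀ ξ ∈ K, 0 < ‖aeval ξ f‖ := fun ξ hξ => norm_pos_iff.mpr fun h => by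
    have h1 : (1 : ℝ) ≤ quasiNorm w ξ := hξ.2
    rw [(hzero ξ).mp h, quasiNorm_zero hw] at h1
    norm_num at h1
  obtain ⟨A, hA, hAK⟩ := hK.exists_forall_le' hcont hK0
  obtain ⟨B, hBK⟩ := hK.exists_bound_of_continuousOn hcont
  have hp : (0 : ℝ) < p := mod_cast (Fact.out : p.Prime).pos
  refine ⟨A / p ^ d, max B 1, by positivity, by positivity, fun ξ hρ1 hρp => ⟨?_, ?_⟩⟩
  · calc A / p ^ d * quasiNorm w ξ ^ d ≤ A / p ^ d * p ^ d := by gcongr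
      _ = A := by field_simp
      _ ≤ ‖aeval ξ f‖ := hAK ξ ⟨hρp, hρ1⟩
  · calc ‖aeval ξ f‖ ≤ max B 1 :=
          (le_abs_self _).trans ((hBK ξ ⟨hρp, hρ1⟩).trans (le_max_left _ _))
      _ ≤ max B 1 * quasiNorm w ξ ^ d := le_mul_of_one_le_right (by positivity) (one_le_pow₀ hρ1)

lemma exists_bounds_norm_aeval (hf : IsQuasielliptic p d w f) :
    ∃ A B : ℝ, 0 < A ∧ 0 < B ∧ ∀ ξ : Fin n → ℚ_[p], ξ ≠ 0 →
      A * quasiNorm w ξ ^ d ≤ ‖aeval ξ f‖ ∧ ‖aeval ξ f‖ ≤ B * quasiNorm w ξ ^ d := by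
  obtain ⟨A, B, hA, hB, hshell⟩ := hf.exists_bounds_on_shell
  refine ⟨A, B, hA, hB, fun ξ hξ => ?_⟩
  obtain ⟨-, hw, hhom, -⟩ := hf
  have hp : (1 : ℝ) < p := mod_cast (Fact.out : p.Prime).one_lt
  obtain ⟨m, hm_le, hm_lt⟩ := exists_mem_Ico_zpow (quasiNorm_pos hξ) hp
  -- the dilation by `a = p^m`, of norm `p^{-m}`, moves `ξ` into the shell `1 ≤ quasiNorm ≤ p`
  let a : ℚ_[p] := (p : ℚ_[p]) ^ m
  have ha0 : a ≠ 0 := zpow_ne_zero _ (Nat.cast_ne_zero.mpr (Fact.out : p.Prime).ne_zero)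
  have ha : ‖a‖ = ((p : ℝ) ^ m)⁻¹ := by simp [a, zpow_neg]
  have hpm : (0 : ℝ) < (p : ℝ) ^ m := zpow_pos (by positivity) m
  obtain ⟨hlo, hhi⟩ := hshell (fun i => a ^ w i * ξ i)
    (by rw [quasiNorm_pow_mul hw, ha, le_inv_mul_iff₀ hpm, mul_one]; exact hm_le)
    (by rw [quasiNorm_pow_mul hw, ha, inv_mul_le_iff₀ hpm, ← zpow_add_one₀ (by positivity)]
        exact hm_lt.le)
  rw [quasiNorm_pow_mul hw, hhom a ha0, norm_mul, norm_pow, mul_pow,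
    mul_left_comm] at hlo hhi
  have had : 0 < ‖a‖ ^ d := pow_pos (norm_pos_iff.mpr ha0) d
  exact ⟨le_of_mul_le_mul_left hlo had, le_of_mul_le_mul_left hhi had⟩

end IsQuasielliptic

/-- Let `F(ξ,x) = f(ξ) + ∑_{⟨k,w⟩ ≤ d−1} c_k(x) ξ^k` be a
semi-quasielliptic polynomial (`f` quasielliptic of degree `d` w.r.t. `w`, the
multi-indices `k ∈ S` satisfying `⟨k,w⟩ ≤ d−1`, and each coefficient function `c_k`
bounded in `p`-adic absolute value). Then there are constants `A₀, A₁ > 0` and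
`M₀ ∈ ℕ`, independent of `x`, with `A₀ Ξ(ξ) ≤ |F(ξ,x)|_p ≤ A₁ Ξ(ξ)` for all `x` and
all `ξ` with `‖ξ‖_p ≥ p^{M₀}`. -/
theorem semiQuasielliptic_bounds (p : ℕ) [Fact p.Prime] {n : ℕ}
    (d : ℕ) (w : Fin n → ℕ) (f : MvPolynomial (Fin n) ℤ_[p])
    (hf : IsQuasielliptic p d w f)
    (S : Finset (Fin n →₀ ℕ)) (hS : ∀ k ∈ S, (∑ i, k i * w i) ≤ d - 1)
    (c : (Fin n →₀ ℕ) → (Fin n → ℚ_[p]) → ℚ_[p])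
    (hc : ∀ k ∈ S, ∃ C : ℝ, ∀ x, ‖c k x‖ ≤ C) :
    ∃ (A₀ A₁ : ℝ) (M₀ : ℕ), 0 < A₀ ∧ 0 < A₁ ∧
      ∀ (x ξ : Fin n → ℚ_[p]), (∃ i, (p : ℝ) ^ (M₀ : ℕ) ≤ ‖ξ i‖) →
        A₀ * Xi p d w ξ ≤
          ‖(aeval ξ f + ∑ k ∈ S, c k x * ∏ i, ξ i ^ (k i) : ℚ_[p])‖ ∧
        ‖(aeval ξ f + ∑ k ∈ S, c k x * ∏ i, ξ i ^ (k i) : ℚ_[p])‖ ≤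
          A₁ * Xi p d w ξ := by
  rcases isEmpty_or_nonempty (Fin n) with _ | _
  · exact ⟨1, 1, 0, one_pos, one_pos, fun _ _ ⟨i, _⟩ => isEmptyElim i⟩
  have hw := hf.2.1
  have hp : (1 : ℝ) < p := mod_cast (Fact.out : p.Prime).one_lt
  obtain ⟨A, B, hA, hB, hbounds⟩ := hf.exists_bounds_norm_aeval
  obtain ⟨R, hR⟩ := exists_norm_sum_le_eps_mul_quasiNorm_pow hw hS hc (half_pos hA)
  rw [Nat.sub_add_cancel (Nat.one_le_iff_ne_zero.mpr hf.degree_ne_zero)] at hR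
  obtain ⟨M, hM⟩ := exists_le_quasiNorm_of_le_norm (𝕜 := ℚ_[p]) hw R
  obtain ⟨M₀, hM₀⟩ := pow_unbounded_of_one_lt M hp
  have hn : (0 : ℝ) < n := mod_cast Fin.pos'
  refine ⟨A / 2 / n, B + A / 2, M₀, by positivity, by positivity, fun x ξ ⟨i, hi⟩ => ?_⟩
  have hξ : ξ ≠ 0 := fun h => by
    rw [h, Pi.zero_apply, norm_zero] at hi
    exact (pow_pos (one_pos.trans hp) M₀).not_ge hi
  obtain ⟨hlo, hhi⟩ := hbounds ξ hξ
  have hsmall := hR x ξ (hM ξ i (hM₀.le.trans hi))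
  have hXi_lo := quasiNorm_pow_le_Xi (w := w) d ξ
  have hXi_hi := Xi_le_card_mul_quasiNorm_pow hw d ξ
  constructor
  · calc A / 2 / n * Xi p d w ξ ≤ A / 2 / n * (n * quasiNorm w ξ ^ d) := by gcongr
      _ = A / 2 * quasiNorm w ξ ^ d := by field_simp
      _ ≤ ‖aeval ξ f‖ - ‖∑ k ∈ S, c k x * ∏ i, ξ i ^ (k i)‖ := by linarith
      _ ≤ _ := norm_sub_le_norm_add _ _
  · calc _ ≤ ‖aeval ξ f‖ + ‖∑ k ∈ S, c k x * ∏ i, ξ i ^ (k i)‖ := norm_add_le _ _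
      _ ≤ (B + A / 2) * quasiNorm w ξ ^ d := by linarith
      _ ≤ (B + A / 2) * Xi p d w ξ := by gcongr
end
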